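/- arXiv:2604.15492 — 7 statements merged into one kernel-verified Lean document; each statement's English description precedes it below -/
import Mathlib

section
/- If a model m is fully linear on the ball B(x, Δ) with gradient error constant κ_eg, and the true gradient satisfies ‖∇f(x)‖ ≥ ε > 0, while the criticality step ensures Δ ≤ μ‖g‖ (where g = ∇m(x)), then ‖g‖ ≥ ε / (κ_eg·μ + 1). -/
open EuclideanSpace

/-- If a model `m` is fully linear on `B(x,Δ)` with gradient error constant `κ_eg`,
`‖∇f(x)‖ ≥ ε > 0`, and the criticality step ensures `Δ ≤ μ‖g‖` with `g = ∇m(x)`,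
then `‖g‖ ≥ ε/(κ_eg·μ + 1)`. -/
theorem stmt0 {n : ℕ} (f m : EuclideanSpace ℝ (Fin n) → ℝ)
    (x : EuclideanSpace ℝ (Fin n)) (Δ μ κeg ε : ℝ)
    (hκ : 0 < κeg) (hμ : 0 < μ) (hε : 0 < ε)
    (hFL : ∀ s : EuclideanSpace ℝ (Fin n), ‖s‖ ≤ Δ →
      ‖gradient f (x + s) - gradient m (x + s)‖ ≤ κeg * Δ)
    (hΔ0 : 0 ≤ Δ)
    (hcrit : Δ ≤ μ * ‖gradient m x‖)
    (hgrad : ε ≤ ‖gradient f x‖) :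
    ε / (κeg * μ + 1) ≤ ‖gradient m x‖ := by
  have h0 := hFL 0 (by simpa using hΔ0)
  simp only [add_zero] at h0
  have hg : ‖gradient f x‖ ≤ ‖gradient m x‖ + κeg * Δ := by
    calc ‖gradient f x‖ = ‖gradient m x + (gradient f x - gradient m x)‖ := by rw [add_sub_cancel]
      _ ≤ ‖gradient m x‖ + ‖gradient f x - gradient m x‖ := norm_add_le _ _
      _ ≤ ‖gradient m x‖ + κeg * Δ := by linarith
  have hk : κeg * Δ ≤ κeg * (μ * ‖gradient m x‖) := by nlinarith
  rw [div_le_iff₀ (by nlinarith)]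
  nlinarith
end

section
/- Suppose the model gradient g_k satisfies ‖g_k‖ ≥ Δ_k/μ at every criticality-loop iteration i, where the radius is Δ_k^i = ω^{i−1}·Δ_k^0 with ω ∈ (0,1), and each model m_k^i is fully linear with gradient error constant κ_eg. If ‖∇f(x_k)‖ > 0, then the criticality loop cannot fail at every iteration; i.e., there cannot exist an infinite sequence of iterations with μ‖g_k^i‖ < ω^{i−1}·Δ_k^0 for all i ≥ 1. -/
open Filter Topology

/-- `g` converges both to `a` (the first bound) and to `0` (the second), so `a = 0`. -/
theorem eq_zero_of_norm_sub_le_of_mul_norm_lt {E : Type*} [NormedAddCommGroup E] {a : E}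
    {g : ℕ → E} {r : ℕ → ℝ} {κ μ : ℝ} (hr : Tendsto r atTop (𝓝 0)) (hμ : 0 < μ)
    (hnear : ∀ᶠ i in atTop, ‖a - g i‖ ≤ κ * r i)
    (hsmall : ∀ᶠ i in atTop, μ * ‖g i‖ < r i) : a = 0 := by
  have hg_to_a : Tendsto g atTop (𝓝 a) := by
    rw [tendsto_iff_norm_sub_tendsto_zero]
    refine squeeze_zero' (.of_forall fun _ ↦ norm_nonneg _) ?_ (by simpa using hr.const_mul κ)
    filter_upwards [hnear] with i hi
    rwa [norm_sub_rev]
  have hg_to_zero : Tendsto g atTop (𝓝 0) := by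
    rw [tendsto_zero_iff_norm_tendsto_zero]
    refine squeeze_zero' (.of_forall fun _ ↦ norm_nonneg _) ?_ (by simpa using hr.div_const μ)
    filter_upwards [hsmall] with i hi
    rw [le_div_iff₀ hμ, mul_comm]
    exact hi.le
  exact tendsto_nhds_unique hg_to_a hg_to_zero

theorem tendsto_pow_pred_mul_atTop_nhds_zero {ω : ℝ} (hω₀ : 0 ≤ ω) (hω₁ : ω < 1) (Δ0 : ℝ) :
    Tendsto (fun i : ℕ ↦ ω ^ (i - 1) * Δ0) atTop (𝓝 0) := by
  simpa using ((tendsto_pow_atTop_nhds_zero_of_lt_one hω₀ hω₁).comp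
    (tendsto_sub_atTop_nat 1)).mul_const Δ0

theorem stmt1_general {n : ℕ} (f : EuclideanSpace ℝ (Fin n) → ℝ)
    (xk : EuclideanSpace ℝ (Fin n)) (g : ℕ → EuclideanSpace ℝ (Fin n))
    (Δ0 ω μ κeg : ℝ)
    (hω : ω ∈ Set.Ioo (0:ℝ) 1) (hμ : 0 < μ)
    (hgradne : gradient f xk ≠ 0)
    (hFL : ∀ i : ℕ, 1 ≤ i → ‖gradient f xk - g i‖ ≤ κeg * (ω ^ (i - 1) * Δ0)) :
    ¬ (∀ i : ℕ, 1 ≤ i → μ * ‖g i‖ < ω ^ (i - 1) * Δ0) := by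
  intro hfail
  exact hgradne (eq_zero_of_norm_sub_le_of_mul_norm_lt (g := g) (κ := κeg)
    (tendsto_pow_pred_mul_atTop_nhds_zero hω.1.le hω.2 Δ0) hμ
    (eventually_atTop.2 ⟨1, hFL⟩) (eventually_atTop.2 ⟨1, hfail⟩))

/-- The criticality loop cannot fail at every iteration: if `∇f(x_k) ≠ 0`,
each model `m_k^i` is fully linear on `B(x_k, ω^{i-1}·Δ_k^0)` with constant `κ_eg`,
then it cannot hold that `μ‖g_k^i‖ < ω^{i-1}·Δ_k^0` for all `i ≥ 1`. -/
theorem stmt1 {n : ℕ} (f : EuclideanSpace ℝ (Fin n) → ℝ)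
    (xk : EuclideanSpace ℝ (Fin n)) (g : ℕ → EuclideanSpace ℝ (Fin n))
    (Δ0 ω μ κeg : ℝ)
    (hΔ0 : 0 < Δ0) (hω : ω ∈ Set.Ioo (0:ℝ) 1) (hμ : 0 < μ) (hκ : 0 < κeg)
    (hgradne : gradient f xk ≠ 0)
    (hFL : ∀ i : ℕ, 1 ≤ i → ‖gradient f xk - g i‖ ≤ κeg * (ω ^ (i - 1) * Δ0)) :
    ¬ (∀ i : ℕ, 1 ≤ i → μ * ‖g i‖ < ω ^ (i - 1) * Δ0) :=
  stmt1_general f xk g Δ0 ω μ κeg hω hμ hgradne hFL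
end

section
/- If the step s_k satisfies the Cauchy decrease condition and ‖g_k‖ > C₀·Δ_k where C₀ = max{κ_bhm, 4κ_ef/(1−η₁)}, and the model m_k is fully linear with function error constant κ_ef, then the acceptance ratio ρ_k satisfies |ρ_k − 1| ≤ 1 − η₁, hence ρ_k ≥ η₁ and the iteration is successful. -/
/-- If the step satisfies the Cauchy decrease, `‖g_k‖ > C₀·Δ_k` with
`C₀ = max{κ_bhm, 4κ_ef/(1-η₁)}`, and the model is fully linear with constant `κ_ef`,
then `|ρ_k - 1| ≤ 1 - η₁`, hence `ρ_k ≥ η₁` (the iteration is successful). -/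
theorem stmt2 {n : ℕ} (f mk : EuclideanSpace ℝ (Fin n) → ℝ)
    (xk sk : EuclideanSpace ℝ (Fin n)) (Δk κef κbhm η₁ Hk : ℝ)
    (hΔ : 0 < Δk) (hκef : 0 < κef) (hκbhm : 0 < κbhm) (hη : η₁ ∈ Set.Ioo (0:ℝ) 1)
    (hHk0 : 0 ≤ Hk) (hHk : Hk ≤ κbhm)
    (hsk : ‖sk‖ ≤ Δk)
    (hFL : ∀ s : EuclideanSpace ℝ (Fin n), ‖s‖ ≤ Δk →
      |f (xk + s) - mk (xk + s)| ≤ κef * Δk ^ 2)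
    (hCauchy : mk xk - mk (xk + sk) ≥
      (1 / 2) * ‖gradient mk xk‖ *
        min Δk (if Hk = 0 then Δk else ‖gradient mk xk‖ / Hk))
    (hg : ‖gradient mk xk‖ > max κbhm (4 * κef / (1 - η₁)) * Δk) :
    |(f xk - f (xk + sk)) / (mk xk - mk (xk + sk)) - 1| ≤ 1 - η₁ ∧
      η₁ ≤ (f xk - f (xk + sk)) / (mk xk - mk (xk + sk)) := by
  obtain ⟨hη0, hη1⟩ := hη
  set g := ‖gradient mk xk‖ with hgdef
  set D := mk xk - mk (xk + sk) with hD
  have h1η : (0:ℝ) < 1 - η₁ := by linarith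
  have hgκ : g > κbhm * Δk :=
    lt_of_le_of_lt (mul_le_mul_of_nonneg_right (le_max_left _ _) hΔ.le) hg
  have hgε : g > (4 * κef / (1 - η₁)) * Δk :=
    lt_of_le_of_lt (mul_le_mul_of_nonneg_right (le_max_right _ _) hΔ.le) hg
  have hgpos : 0 < g := lt_trans (by positivity) hgκ
  -- the min is Δk
  have hmin : min Δk (if Hk = 0 then Δk else g / Hk) = Δk := by
    split_ifs with h
    · exact min_self _
    · have hHkpos : 0 < Hk := lt_of_le_of_ne hHk0 (Ne.symm h)
      have : Δk ≤ g / Hk := by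
        rw [le_div_iff₀ hHkpos]
        nlinarith
      exact min_eq_left this
  rw [hmin] at hCauchy
  have hDge : D ≥ 1 / 2 * g * Δk := hCauchy
  have hDpos : 0 < D := lt_of_lt_of_le (by positivity) hDge
  -- error bound
  have h0 : |f (xk + 0) - mk (xk + 0)| ≤ κef * Δk ^ 2 := hFL 0 (by simp [hΔ.le])
  have hs : |f (xk + sk) - mk (xk + sk)| ≤ κef * Δk ^ 2 := hFL sk hsk
  rw [add_zero] at h0
  have hnum : |(f xk - f (xk + sk)) - D| ≤ 2 * κef * Δk ^ 2 := by
    have : (f xk - f (xk + sk)) - D =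
        (f xk - mk xk) - (f (xk + sk) - mk (xk + sk)) := by rw [hD]; ring
    rw [this]
    calc |(f xk - mk xk) - (f (xk + sk) - mk (xk + sk))|
        ≤ |f xk - mk xk| + |f (xk + sk) - mk (xk + sk)| := abs_sub _ _
      _ ≤ κef * Δk ^ 2 + κef * Δk ^ 2 := add_le_add h0 hs
      _ = 2 * κef * Δk ^ 2 := by ring
  have key : |(f xk - f (xk + sk)) / D - 1| ≤ 1 - η₁ := by
    have heq : (f xk - f (xk + sk)) / D - 1 = ((f xk - f (xk + sk)) - D) / D := by
      field_simp
    rw [heq, abs_div, abs_of_pos hDpos, div_le_iff₀ hDpos]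
    have h2 : 2 * κef * Δk ^ 2 ≤ (1 - η₁) * D := by
      have : (1 - η₁) * (1 / 2 * g * Δk) ≤ (1 - η₁) * D :=
        mul_le_mul_of_nonneg_left hDge h1η.le
      have hge : g * Δk ≥ (4 * κef / (1 - η₁)) * Δk * Δk := by nlinarith
      have : (1 - η₁) * ((4 * κef / (1 - η₁)) * Δk * Δk) = 4 * κef * Δk ^ 2 := by
        field_simp
      nlinarith [mul_le_mul_of_nonneg_left hge h1η.le]
    linarith [hnum]
  refine ⟨key, ?_⟩
  have := abs_le.mp key
  linarith [this.1]
end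

section
/- Suppose for every k ∈ S (successful iterations) we have f(x_k) − f(x_{k+1}) ≥ c·Δ_k² for some c > 0 and Δ_k ≤ Δ_max, f is bounded below, x_{k+1} = x_k for k ∉ S, and for each k ∉ S, Δ_k ≤ γ·Δ_{i(k)} where i(k) ∈ S is the most recent successful iteration before k (or Δ_k ≤ Δ_0·γ if no such iteration exists), with γ ≥ 1 fixed. If S is infinite then Δ_k → 0 over all k. -/
/-!
Each successful step decreases `f` by at least `c Δ_k²`, and `f` is bounded below, so
`∑_{k ∈ S} Δ_k²` converges and `Δ_k → 0` along `S`. An unsuccessful `k` beyond some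
`m ∈ S` has `Δ_k ≤ γ Δ_{i(k)}` with `m ≤ i(k) ∈ S`; since `S` is infinite, `i(k) → ∞`,
so these radii tend to `0` as well.
-/

open Filter Topology

theorem summable_of_le_sub_succ {u a : ℕ → ℝ} {B : ℝ} (ha : ∀ k, 0 ≤ a k)
    (hle : ∀ k, a k ≤ u k - u (k + 1)) (hB : ∀ k, B ≤ u k) : Summable a := by
  refine summable_of_sum_range_le (c := u 0 - B) ha fun n => ?_
  calc ∑ k ∈ Finset.range n, a k
      ≤ ∑ k ∈ Finset.range n, (u k - u (k + 1)) := Finset.sum_le_sum fun k _ => hle k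
    _ = u 0 - u n := Finset.sum_range_sub' u n
    _ ≤ u 0 - B := by linarith [hB n]

theorem tendsto_indicator_of_sq_le_sub_succ {u Δ : ℕ → ℝ} {S : Set ℕ} {B c : ℝ} (hc : 0 < c)
    (hΔ : ∀ k, 0 ≤ Δ k) (hB : ∀ k, B ≤ u k) (hmono : ∀ k, u (k + 1) ≤ u k)
    (hdec : ∀ k ∈ S, c * Δ k ^ 2 ≤ u k - u (k + 1)) :
    Tendsto (S.indicator Δ) atTop (𝓝 0) := by
  set d := S.indicator Δ
  have hd : ∀ k, 0 ≤ d k := fun k => Set.indicator_nonneg (fun k _ => hΔ k) k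
  have hsq : Tendsto (fun k => c * d k ^ 2) atTop (𝓝 0) := by
    refine (summable_of_le_sub_succ (fun k => by positivity) (fun k => ?_) hB).tendsto_atTop_zero
    by_cases hk : k ∈ S
    · simpa [d, hk] using hdec k hk
    · simpa [d, hk] using hmono k
  simpa only [mul_zero, Real.sqrt_zero, inv_mul_cancel_left₀ hc.ne', Real.sqrt_sq (hd _)]
    using (hsq.const_mul c⁻¹).sqrt

section GoverningIndex

variable {S : Set ℕ} {i : ℕ → ℕ}

open Classical in
noncomputable def governingIndex (S : Set ℕ) (i : ℕ → ℕ) (k : ℕ) : ℕ :=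
  if k ∈ S then k else i k

theorem le_governingIndex (hi : ∀ k ∉ S, ∀ m ∈ S, m < k → m ≤ i k) {m k : ℕ} (hm : m ∈ S)
    (hmk : m < k) : m ≤ governingIndex S i k := by
  unfold governingIndex
  split_ifs with hk
  · exact hmk.le
  · exact hi k hk m hm hmk

theorem tendsto_governingIndex (hS : S.Infinite) (hi : ∀ k ∉ S, ∀ m ∈ S, m < k → m ≤ i k) :
    Tendsto (governingIndex S i) atTop atTop := by
  refine tendsto_atTop_atTop.mpr fun N => ?_
  obtain ⟨m, hm, hNm⟩ := hS.exists_gt N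
  exact ⟨m + 1, fun k hk => hNm.le.trans (le_governingIndex hi hm (by omega))⟩

theorem le_mul_indicator_governingIndex {Δ : ℕ → ℝ} {γ : ℝ} (hγ : 1 ≤ γ) (hΔ : ∀ k, 0 ≤ Δ k)
    (hpred : ∀ k ∉ S, (∃ j ∈ S, j < k) → i k ∈ S ∧ Δ k ≤ γ * Δ (i k)) {m k : ℕ} (hm : m ∈ S)
    (hmk : m < k) : Δ k ≤ γ * S.indicator Δ (governingIndex S i k) := by
  unfold governingIndex
  split_ifs with hk
  · rw [Set.indicator_of_mem hk]
    exact le_mul_of_one_le_left (hΔ k) hγ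
  · obtain ⟨hiS, hle⟩ := hpred k hk ⟨m, hm, hmk⟩
    rwa [Set.indicator_of_mem hiS]

end GoverningIndex

theorem stmt5_general {n : ℕ} (f : EuclideanSpace ℝ (Fin n) → ℝ)
    (x : ℕ → EuclideanSpace ℝ (Fin n)) (Δ : ℕ → ℝ) (S : Set ℕ)
    (c γ : ℝ) (i : ℕ → ℕ)
    (hc : 0 < c) (hγ : 1 ≤ γ)
    (hΔpos : ∀ k, 0 < Δ k)
    (hbdd : ∃ B : ℝ, ∀ y, B ≤ f y)
    (hmono : ∀ k, f (x (k + 1)) ≤ f (x k))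
    (hdecS : ∀ k ∈ S, f (x k) - f (x (k + 1)) ≥ c * (Δ k) ^ 2)
    (hpred : ∀ k ∉ S, (∃ j ∈ S, j < k) →
      i k ∈ S ∧ i k < k ∧ (∀ j ∈ S, j < k → j ≤ i k) ∧ Δ k ≤ γ * Δ (i k))
    (hSinf : S.Infinite) :
    Tendsto Δ atTop (nhds 0) := by
  obtain ⟨B, hB⟩ := hbdd
  have hS : Tendsto (S.indicator Δ) atTop (𝓝 0) :=
    tendsto_indicator_of_sq_le_sub_succ hc (fun k => (hΔpos k).le) (fun k => hB (x k)) hmono hdecS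
  have hi : ∀ k ∉ S, ∀ m ∈ S, m < k → m ≤ i k :=
    fun k hk m hm hmk => (hpred k hk ⟨m, hm, hmk⟩).2.2.1 m hm hmk
  have hgov := (hS.comp (tendsto_governingIndex hSinf hi)).const_mul γ
  rw [mul_zero] at hgov
  obtain ⟨m, hm⟩ := hSinf.nonempty
  have hbound : ∀ k, m < k → Δ k ≤ γ * S.indicator Δ (governingIndex S i k) :=
    fun k => le_mul_indicator_governingIndex hγ (fun k => (hΔpos k).le)
      (fun k hk hex => ⟨(hpred k hk hex).1, (hpred k hk hex).2.2.2⟩) hm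
  exact tendsto_of_tendsto_of_tendsto_of_le_of_le' tendsto_const_nhds hgov
    (Eventually.of_forall fun k => (hΔpos k).le) ((eventually_gt_atTop m).mono hbound)

/-- If successful iterations `k ∈ S` give `f(x_k) - f(x_{k+1}) ≥ c·Δ_k²`, `f` is
bounded below, `x_{k+1} = x_k` off `S`, and for `k ∉ S` the radius is controlled by
the most recent successful iteration (`Δ_k ≤ γ·Δ_{i(k)}`, or `Δ_k ≤ Δ_0·γ` if none),
and `S` is infinite, then `Δ_k → 0`. -/
theorem stmt5 {n : ℕ} (f : EuclideanSpace ℝ (Fin n) → ℝ)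
    (x : ℕ → EuclideanSpace ℝ (Fin n)) (Δ : ℕ → ℝ) (S : Set ℕ)
    (c γ Δmax : ℝ) (i : ℕ → ℕ)
    (hc : 0 < c) (hγ : 1 ≤ γ)
    (hΔpos : ∀ k, 0 < Δ k) (hΔmax : ∀ k, Δ k ≤ Δmax)
    (hbdd : ∃ B : ℝ, ∀ y, B ≤ f y)
    (hmono : ∀ k, f (x (k + 1)) ≤ f (x k))
    (hdecS : ∀ k ∈ S, f (x k) - f (x (k + 1)) ≥ c * (Δ k) ^ 2)
    (hfix : ∀ k ∉ S, x (k + 1) = x k)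
    (hpred : ∀ k ∉ S, (∃ j ∈ S, j < k) →
      i k ∈ S ∧ i k < k ∧ (∀ j ∈ S, j < k → j ≤ i k) ∧ Δ k ≤ γ * Δ (i k))
    (hnopred : ∀ k ∉ S, (¬ ∃ j ∈ S, j < k) → Δ k ≤ Δ 0 * γ)
    (hSinf : S.Infinite) :
    Tendsto Δ atTop (nhds 0) :=
  stmt5_general f x Δ S c γ i hc hγ hΔpos hbdd hmono hdecS hpred hSinf
end

section
/- Suppose at iteration k the model is fully linear with error constants κ_ef, κ_eg, and the step s_k satisfies the Cauchy decrease. If Δ_k ≤ min{‖g_k‖/κ_bhm, ‖g_k‖(1−η₁)/(4κ_ef)}, then the denominator of ρ_k satisfies m_k(x_k) − m_k(x_k+s_k) ≥ (1/2)‖g_k‖Δ_k and |ρ_k − 1| ≤ 4κ_ef·Δ_k/‖g_k‖ ≤ 1 − η₁. -/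
/-! Once `Δ ≤ ‖g‖/κ_bhm`, the Cauchy radius `min{Δ, ‖g‖/‖H‖}` is just `Δ`, so the predicted
reduction is at least `‖g‖Δ/2`. Full linearity at `s = 0` and `s = s_k` makes actual and predicted
reduction differ by at most `2κ_ef Δ²`; dividing by the predicted reduction gives
`|ρ - 1| ≤ 4κ_ef Δ/‖g‖`, which the second bound on `Δ` makes at most `1 - η₁`. -/

/-- The `if` encodes `min Δ (g / H)` with the convention `g / 0 = ∞`. -/
lemma min_cauchyRadius_eq_left {Δ g H κ : ℝ} (hg : 0 ≤ g) (hH : 0 ≤ H) (hHκ : H ≤ κ)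
    (hΔ : Δ ≤ g / κ) : min Δ (if H = 0 then Δ else g / H) = Δ := by
  split_ifs with hH0
  · exact min_self Δ
  · exact min_eq_left <| hΔ.trans <| div_le_div_of_nonneg_left hg (hH.lt_of_ne' hH0) hHκ

lemma abs_sub_sub_sub_le_of_abs_sub_le {α : Type*} (f m : α → ℝ) {x y : α} {c : ℝ}
    (hx : |f x - m x| ≤ c) (hy : |f y - m y| ≤ c) :
    |(f x - f y) - (m x - m y)| ≤ 2 * c := by
  calc |(f x - f y) - (m x - m y)| = |(f x - m x) - (f y - m y)| := by ring_nf
    _ ≤ |f x - m x| + |f y - m y| := abs_sub _ _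
    _ ≤ 2 * c := by linarith

lemma abs_div_sub_one_le_of_abs_sub_le {a d b ε : ℝ} (hb : 0 < b) (hbd : b ≤ d)
    (h : |a - d| ≤ ε) : |a / d - 1| ≤ ε / b := by
  have hd : 0 < d := hb.trans_le hbd
  calc |a / d - 1| = |a - d| / d := by
        rw [div_sub_one hd.ne', abs_div, abs_of_pos hd]
    _ ≤ ε / b := div_le_div₀ ((abs_nonneg _).trans h) h hb hbd

theorem stmt11_general {n : ℕ} (f mk : EuclideanSpace ℝ (Fin n) → ℝ)
    (xk sk : EuclideanSpace ℝ (Fin n)) (Δk κef κbhm η₁ Hk : ℝ)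
    (hΔ : 0 < Δk) (hκef : 0 < κef)
    (hHk0 : 0 ≤ Hk) (hHk : Hk ≤ κbhm)
    (hsk : ‖sk‖ ≤ Δk)
    (hgne : gradient mk xk ≠ 0)
    (hFL : ∀ s : EuclideanSpace ℝ (Fin n), ‖s‖ ≤ Δk →
      |f (xk + s) - mk (xk + s)| ≤ κef * Δk ^ 2)
    (hCauchy : mk xk - mk (xk + sk) ≥
      (1 / 2) * ‖gradient mk xk‖ *
        min Δk (if Hk = 0 then Δk else ‖gradient mk xk‖ / Hk))
    (hΔsmall : Δk ≤ min (‖gradient mk xk‖ / κbhm)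
      (‖gradient mk xk‖ * (1 - η₁) / (4 * κef))) :
    mk xk - mk (xk + sk) ≥ (1 / 2) * ‖gradient mk xk‖ * Δk ∧
      |(f xk - f (xk + sk)) / (mk xk - mk (xk + sk)) - 1| ≤
        4 * κef * Δk / ‖gradient mk xk‖ ∧
      4 * κef * Δk / ‖gradient mk xk‖ ≤ 1 - η₁ := by
  have hg : 0 < ‖gradient mk xk‖ := norm_pos_iff.mpr hgne
  have hpred : mk xk - mk (xk + sk) ≥ (1 / 2) * ‖gradient mk xk‖ * Δk := by
    rwa [min_cauchyRadius_eq_left hg.le hHk0 hHk (hΔsmall.trans (min_le_left _ _))] at hCauchy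
  have hFL0 := hFL 0 (by simpa using hΔ.le)
  rw [add_zero] at hFL0
  have herr := abs_sub_sub_sub_le_of_abs_sub_le f mk hFL0 (hFL sk hsk)
  refine ⟨hpred, ?_, ?_⟩
  · calc _ ≤ 2 * (κef * Δk ^ 2) / ((1 / 2) * ‖gradient mk xk‖ * Δk) :=
          abs_div_sub_one_le_of_abs_sub_le (by positivity) hpred herr
      _ = 4 * κef * Δk / ‖gradient mk xk‖ := by field_simp; ring
  · rw [div_le_iff₀ hg, ← le_div_iff₀' (by positivity)]
    simpa [mul_comm] using hΔsmall.trans (min_le_right _ _)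

/-- If the model is fully linear, the step satisfies the Cauchy decrease, and
`Δ_k ≤ min{‖g_k‖/κ_bhm, ‖g_k‖(1-η₁)/(4κ_ef)}`, then
`m_k(x_k) - m_k(x_k+s_k) ≥ (1/2)‖g_k‖Δ_k` and
`|ρ_k - 1| ≤ 4κ_ef·Δ_k/‖g_k‖ ≤ 1 - η₁`. -/
theorem stmt11 {n : ℕ} (f mk : EuclideanSpace ℝ (Fin n) → ℝ)
    (xk sk : EuclideanSpace ℝ (Fin n)) (Δk κef κeg κbhm η₁ Hk : ℝ)
    (hΔ : 0 < Δk) (hκef : 0 < κef) (hκeg : 0 < κeg) (hκbhm : 0 < κbhm)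
    (hη : η₁ ∈ Set.Ioo (0:ℝ) 1)
    (hHk0 : 0 ≤ Hk) (hHk : Hk ≤ κbhm)
    (hsk : ‖sk‖ ≤ Δk)
    (hgne : gradient mk xk ≠ 0)
    (hFL : ∀ s : EuclideanSpace ℝ (Fin n), ‖s‖ ≤ Δk →
      |f (xk + s) - mk (xk + s)| ≤ κef * Δk ^ 2)
    (hCauchy : mk xk - mk (xk + sk) ≥
      (1 / 2) * ‖gradient mk xk‖ *
        min Δk (if Hk = 0 then Δk else ‖gradient mk xk‖ / Hk))
    (hΔsmall : Δk ≤ min (‖gradient mk xk‖ / κbhm)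
      (‖gradient mk xk‖ * (1 - η₁) / (4 * κef))) :
    mk xk - mk (xk + sk) ≥ (1 / 2) * ‖gradient mk xk‖ * Δk ∧
      |(f xk - f (xk + sk)) / (mk xk - mk (xk + sk)) - 1| ≤
        4 * κef * Δk / ‖gradient mk xk‖ ∧
      4 * κef * Δk / ‖gradient mk xk‖ ≤ 1 - η₁ :=
  stmt11_general f mk xk sk Δk κef κbhm η₁ Hk hΔ hκef hHk0 hHk hsk hgne hFL hCauchy hΔsmall
end

section
/- Suppose f is bounded below, the sequence (f(x_n)) is nonincreasing, and for each n in an index set K ∩ S we have f(x_n) − f(x_{n+1}) ≥ (η₁·ε/2)·Δ_n and ‖x_n − x_{n+1}‖ ≤ Δ_n, while x_n = x_{n+1} for n in K outside S. Then for index pairs k_i < j_i with all intermediate indices in K, ‖x_{k_i} − x_{j_i}‖ ≤ 2(f(x_{k_i}) − f(x_{j_i}))/(η₁·ε), and consequently ‖x_{k_i} − x_{j_i}‖ → 0 as i → ∞. -/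
open Filter

/-- Under the telescoping decrease bound on `K ∩ S` and stalling off `S`, for index
pairs `k_i < j_i` with all intermediate indices in `K`,
`‖x_{k_i} - x_{j_i}‖ ≤ 2(f(x_{k_i}) - f(x_{j_i}))/(η₁ ε)`, and this tends to `0`. -/
theorem stmt13 {n : ℕ} (f : EuclideanSpace ℝ (Fin n) → ℝ)
    (x : ℕ → EuclideanSpace ℝ (Fin n)) (Δ : ℕ → ℝ) (S K : Set ℕ)
    (η₁ ε : ℝ) (k j : ℕ → ℕ)
    (hη : η₁ ∈ Set.Ioo (0:ℝ) 1) (hε : 0 < ε) (hΔpos : ∀ m, 0 < Δ m)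
    (hbdd : ∃ B : ℝ, ∀ y, B ≤ f y)
    (hmono : ∀ m, f (x (m + 1)) ≤ f (x m))
    (hdec : ∀ m ∈ K ∩ S, f (x m) - f (x (m + 1)) ≥ (η₁ * ε / 2) * Δ m)
    (hstep : ∀ m ∈ K ∩ S, ‖x (m + 1) - x m‖ ≤ Δ m)
    (hfix : ∀ m ∈ K \ S, x (m + 1) = x m)
    (hkmono : StrictMono k) (hjmono : StrictMono j)
    (hkj : ∀ i, k i < j i)
    (hint : ∀ i, ∀ m, k i ≤ m → m < j i → m ∈ K) :
    (∀ i, ‖x (k i) - x (j i)‖ ≤ 2 * (f (x (k i)) - f (x (j i))) / (η₁ * ε)) ∧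
      Tendsto (fun i => ‖x (k i) - x (j i)‖) atTop (nhds 0) := by
  have hc : (0:ℝ) < η₁ * ε := mul_pos hη.1 hε
  -- key inductive bound
  have key : ∀ a b : ℕ, a ≤ b → (∀ m, a ≤ m → m < b → m ∈ K) →
      ‖x a - x b‖ ≤ 2 * (f (x a) - f (x b)) / (η₁ * ε) := by
    intro a b hab
    induction b, hab using Nat.le_induction with
    | base =>
      intro _
      simp only [sub_self, norm_zero]
      positivity
    | succ b hab ih =>
      intro hK
      have hb : b ∈ K := hK b hab (Nat.lt_succ_self b)
      have h1 : ‖x a - x b‖ ≤ 2 * (f (x a) - f (x b)) / (η₁ * ε) :=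
        ih fun m hm hm' => hK m hm (hm'.trans (Nat.lt_succ_self b))
      have hstepb : ‖x b - x (b+1)‖ ≤ 2 * (f (x b) - f (x (b+1))) / (η₁ * ε) := by
        by_cases hs : b ∈ S
        · have h2 := hstep b ⟨hb, hs⟩
          have h3 := hdec b ⟨hb, hs⟩
          rw [norm_sub_rev]
          calc ‖x (b+1) - x b‖ ≤ Δ b := h2
            _ ≤ 2 * (f (x b) - f (x (b+1))) / (η₁ * ε) := by
                rw [le_div_iff₀ hc]
                nlinarith
        · rw [hfix b ⟨hb, hs⟩]
          simp only [sub_self, norm_zero, mul_zero, zero_div, le_refl]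
      calc ‖x a - x (b+1)‖ ≤ ‖x a - x b‖ + ‖x b - x (b+1)‖ := norm_sub_le_norm_sub_add_norm_sub _ _ _
        _ ≤ 2 * (f (x a) - f (x b)) / (η₁ * ε) + 2 * (f (x b) - f (x (b+1))) / (η₁ * ε) :=
            add_le_add h1 hstepb
        _ = 2 * (f (x a) - f (x (b+1))) / (η₁ * ε) := by ring
  have hbound : ∀ i, ‖x (k i) - x (j i)‖ ≤ 2 * (f (x (k i)) - f (x (j i))) / (η₁ * ε) :=
    fun i => key (k i) (j i) (hkj i).le (hint i)
  refine ⟨hbound, ?_⟩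
  -- convergence of f ∘ x
  obtain ⟨B, hB⟩ := hbdd
  have hanti : Antitone (fun m => f (x m)) := antitone_nat_of_succ_le hmono
  have hbdd' : BddBelow (Set.range fun m => f (x m)) := ⟨B, by rintro y ⟨m, rfl⟩; exact hB _⟩
  obtain ⟨L, hL⟩ : ∃ L, Tendsto (fun m => f (x m)) atTop (nhds L) :=
    ⟨_, tendsto_atTop_ciInf hanti hbdd'⟩
  have hLk : Tendsto (fun i => f (x (k i))) atTop (nhds L) :=
    hL.comp hkmono.tendsto_atTop
  have hLj : Tendsto (fun i => f (x (j i))) atTop (nhds L) :=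
    hL.comp hjmono.tendsto_atTop
  have h0 : Tendsto (fun i => 2 * (f (x (k i)) - f (x (j i))) / (η₁ * ε)) atTop (nhds 0) := by
    have := ((hLk.sub hLj).const_mul 2).div_const (η₁ * ε)
    simpa using this
  exact squeeze_zero (fun i => norm_nonneg _) hbound h0
end

section
/- Suppose Δ_{k+1} = γ_dec·Δ_k on an infinite subset U of iterations with γ_dec ∈ (0,1), Δ_{k+1} ≤ min{γ_inc·Δ_k, Δ_max} otherwise, and every increase of the radius happens only at iterations in an infinite set S on which Δ_k → 0. Then Δ_k → 0 along the entire sequence. -/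
open Filter

/-- If `Δ_{k+1} = γ_dec·Δ_k` on an infinite set `U`, `Δ_{k+1} ≤ min{γ_inc·Δ_k, Δ_max}`
otherwise, every increase of the radius happens only via iterations in an infinite set
`S` along which `Δ_k → 0` (for `k ∉ S`, `Δ_k ≤ γ_inc·Δ_{i(k)}` with `i(k)` the most
recent element of `S` before `k`), then `Δ_k → 0` along the entire sequence. -/
theorem stmt16 (Δ : ℕ → ℝ) (U S : Set ℕ) (γdec γinc Δmax : ℝ) (i : ℕ → ℕ)
    (hγdec : γdec ∈ Set.Ioo (0:ℝ) 1) (hγinc : 1 < γinc)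
    (hΔpos : ∀ k, 0 < Δ k) (hΔmax : ∀ k, Δ k ≤ Δmax)
    (hUinf : U.Infinite)
    (hU : ∀ k ∈ U, Δ (k + 1) = γdec * Δ k)
    (hUc : ∀ k ∉ U, Δ (k + 1) ≤ min (γinc * Δ k) Δmax)
    (hSinf : S.Infinite)
    (hS : ∀ δ > 0, {k ∈ S | δ ≤ Δ k}.Finite)
    (hpred : ∀ k ∉ S, (∃ j ∈ S, j < k) →
      i k ∈ S ∧ i k < k ∧ (∀ j ∈ S, j < k → j ≤ i k) ∧ Δ k ≤ γinc * Δ (i k)) :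
    Tendsto Δ atTop (nhds 0) := by
  rw [Metric.tendsto_atTop]
  intro ε hε
  have hγi : 0 < γinc := lt_trans one_pos hγinc
  set δ := ε / γinc with hδdef
  have hδ : 0 < δ := div_pos hε hγi
  have hδε : δ < ε := by
    rw [hδdef, div_lt_iff₀ hγi]; nlinarith
  obtain ⟨N, hN⟩ := (hS δ hδ).bddAbove
  have hsmall : ∀ k ∈ S, N < k → Δ k < δ := by
    intro k hk hk'
    by_contra h
    push_neg at h
    exact absurd (hN ⟨hk, h⟩) (not_le.mpr hk')
  obtain ⟨N', hN'S, hNN'⟩ := hSinf.exists_gt N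
  refine ⟨N' + 1, fun n hn => ?_⟩
  have hn' : N' < n := by omega
  rw [Real.dist_eq, sub_zero, abs_of_pos (hΔpos n)]
  by_cases hnS : n ∈ S
  · exact lt_of_lt_of_le (hsmall n hnS (lt_trans hNN' hn')) hδε.le
  · obtain ⟨hiS, hik, hmax, hΔn⟩ := hpred n hnS ⟨N', hN'S, hn'⟩
    have h1 : N < i n := lt_of_lt_of_le hNN' (hmax N' hN'S hn')
    have h2 := hsmall (i n) hiS h1
    calc Δ n ≤ γinc * Δ (i n) := hΔn
      _ < γinc * δ := by nlinarith
      _ = ε := by rw [hδdef]; field_simp [hγi.ne']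
end
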